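/- arXiv:1906.06458 — 4 statements merged into one kernel-verified Lean document; each statement's English description precedes it below -/
import Mathlib

section
/- Gupta's co-density conjecture implies Gupta's 1967 conjecture; that is: if every finite loopless multigraph H satisfies ξ(H) ≥ min{δ(H)−1, ⌊Φ(H)⌋}, then every finite loopless multigraph G whose minimum degree δ(G) cannot be expressed in the form 2p·μ(G)−q for any two integers p and q satisfying q ≥ 0 and p > μ(G)+⌊(q−1)/2⌋ satisfies ξ(G) ≥ δ(G)−μ(G)+1. -/
open Finset

variable {V E : Type} [Fintype V] [DecidableEq V] [Fintype E]

/-- A multigraph given by an incidence map `ends : E → Sym2 V` is loopless if no edge is a loop. -/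
def Loopless (ends : E → Sym2 V) : Prop := ∀ e : E, ¬ (ends e).IsDiag

/-- The degree of a vertex: the number of edges incident with it. -/
def mDegree (ends : E → Sym2 V) (v : V) : ℕ :=
  (univ.filter fun e => v ∈ ends e).card

/-- The minimum degree δ(G). -/
noncomputable def minDegree (ends : E → Sym2 V) : ℕ :=
  sInf (Set.range (mDegree ends))

/-- The maximum degree Δ(G). -/
noncomputable def maxDegree (ends : E → Sym2 V) : ℕ :=
  sSup (Set.range (mDegree ends))

/-- The maximum multiplicity μ(G) of an edge. -/
noncomputable def maxMultiplicity (ends : E → Sym2 V) : ℕ :=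
  sSup (Set.range fun e : E => (univ.filter fun f : E => ends f = ends e).card)

/-- `E(U)`: the set of edges with both ends in `U`. -/
def edgesIn (ends : E → Sym2 V) (U : Finset V) : Finset E :=
  univ.filter fun e => ∀ v ∈ ends e, v ∈ U

/-- `E⁺(U)`: the set of edges with at least one end in `U`. -/
def edgesPlus (ends : E → Sym2 V) (U : Finset V) : Finset E :=
  univ.filter fun e => ∃ v ∈ ends e, v ∈ U

/-- `F(U)`: the set of edges with exactly one end in `U`. -/
def edgesF (ends : E → Sym2 V) (U : Finset V) : Finset E :=
  univ.filter fun e => (∃ v ∈ ends e, v ∈ U) ∧ ¬ ∀ v ∈ ends e, v ∈ U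

/-- `E(X,Y)`: the set of edges with one end in `X` and the other end in `Y`. -/
def edgesBetween (ends : E → Sym2 V) (X Y : Finset V) : Finset E :=
  univ.filter fun e => ∃ x ∈ X, ∃ y ∈ Y, ends e = s(x, y)

/-- An odd set: a vertex set of odd size at least 3. -/
def IsOddSet (U : Finset V) : Prop := 3 ≤ U.card ∧ Odd U.card

/-- A proper edge coloring: each vertex is incident with at most one edge of each color. -/
def IsProperEdgeColoring (ends : E → Sym2 V) {k : ℕ} (c : E → Fin k) : Prop :=
  ∀ v : V, ∀ e f : E, v ∈ ends e → v ∈ ends f → c e = c f → e = f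

/-- The chromatic index χ'(G). -/
noncomputable def chromaticIndex (ends : E → Sym2 V) : ℕ :=
  sInf {k : ℕ | ∃ c : E → Fin k, IsProperEdgeColoring ends c}

/-- A cover coloring: each vertex is incident with at least one edge of each color. -/
def IsCoverColoring (ends : E → Sym2 V) {k : ℕ} (c : E → Fin k) : Prop :=
  ∀ (v : V) (i : Fin k), ∃ e : E, v ∈ ends e ∧ c e = i

/-- The cover index ξ(G). -/
noncomputable def coverIndex (ends : E → Sym2 V) : ℕ :=
  sSup {k : ℕ | ∃ c : E → Fin k, IsCoverColoring ends c}

/-- The density Γ(G) = max over odd sets U of 2|E(U)|/(|U|-1). -/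
noncomputable def density (ends : E → Sym2 V) : ℝ :=
  sSup {x : ℝ | ∃ U : Finset V, IsOddSet U ∧
    x = 2 * (edgesIn ends U).card / ((U.card : ℝ) - 1)}

/-- The co-density Φ(G) = min over odd sets U of 2|E⁺(U)|/(|U|+1). -/
noncomputable def codensity (ends : E → Sym2 V) : ℝ :=
  sInf {x : ℝ | ∃ U : Finset V, IsOddSet U ∧
    x = 2 * (edgesPlus ends U).card / ((U.card : ℝ) + 1)}

lemma aux_minDeg_le (ends : E → Sym2 V) (v : V) : minDegree ends ≤ mDegree ends v :=
  Nat.sInf_le (Set.mem_range_self v)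

lemma aux_mult_le (ends : E → Sym2 V) (e : E) :
    (univ.filter fun f => ends f = ends e).card ≤ maxMultiplicity ends := by
  apply le_csSup
  · exact ⟨Fintype.card E, by rintro x ⟨e', rfl⟩; simpa using Finset.card_le_univ _⟩
  · exact ⟨e, rfl⟩

lemma aux_sym2_rep {α : Type*} (z : Sym2 α) : ∃ x y : α, z = s(x, y) := by
  induction z using Sym2.ind with
  | _ x y => exact ⟨x, y, rfl⟩

lemma aux_sum_deg (ends : E → Sym2 V) (U : Finset V) :
    ∑ v ∈ U, mDegree ends v = ∑ e : E, (U.filter (· ∈ ends e)).card := by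
  simp only [mDegree, Finset.card_filter]
  exact Finset.sum_comm

lemma aux_plus_card (ends : E → Sym2 V) (U : Finset V) :
    (edgesPlus ends U).card = (edgesIn ends U).card + (edgesF ends U).card := by
  classical
  rw [← Finset.card_union_of_disjoint]
  · congr 1
    ext e
    simp only [edgesPlus, edgesIn, edgesF, Finset.mem_union, Finset.mem_filter,
      Finset.mem_univ, true_and]
    constructor
    · intro h
      by_cases hall : ∀ v ∈ ends e, v ∈ U
      · exact Or.inl hall
      · exact Or.inr ⟨h, hall⟩
    · rintro (h | h)
      · obtain ⟨x, y, hxy⟩ := aux_sym2_rep (ends e)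
        refine ⟨x, ?_, h x ?_⟩ <;> · rw [hxy]; exact Sym2.mem_mk_left x y
      · exact h.1
  · rw [Finset.disjoint_left]
    intro e he hf
    simp only [edgesIn, edgesF, Finset.mem_filter, Finset.mem_univ, true_and] at he hf
    exact hf.2 he

lemma aux_deg_count (ends : E → Sym2 V) (U : Finset V) :
    ∑ e : E, (U.filter (· ∈ ends e)).card
      ≤ 2 * (edgesIn ends U).card + (edgesF ends U).card := by
  classical
  calc ∑ e : E, (U.filter (· ∈ ends e)).card
      ≤ ∑ e : E, (2 * (if e ∈ edgesIn ends U then 1 else 0)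
          + (if e ∈ edgesF ends U then 1 else 0)) := by
        apply Finset.sum_le_sum
        intro e _
        obtain ⟨x, y, hxy⟩ := aux_sym2_rep (ends e)
        have hsub : U.filter (· ∈ ends e) ⊆ {x, y} := by
          intro v hv
          rw [Finset.mem_filter, hxy] at hv
          simpa [Sym2.mem_iff] using hv.2
        by_cases hin : e ∈ edgesIn ends U
        · have h2 : (U.filter (· ∈ ends e)).card ≤ 2 :=
            (Finset.card_le_card hsub).trans ((Finset.card_insert_le _ _).trans (by simp))
          simp only [if_pos hin]
          split <;> omega
        · by_cases hf : e ∈ edgesF ends U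
          · have h1 : (U.filter (· ∈ ends e)).card ≤ 1 := by
              rw [Finset.card_le_one]
              intro a ha b hb
              rw [Finset.mem_filter] at ha hb
              by_contra hab
              simp only [edgesF, Finset.mem_filter, Finset.mem_univ, true_and] at hf
              apply hf.2
              intro w hw
              rw [hxy, Sym2.mem_iff] at hw
              have hva := ha.2; have hvb := hb.2
              rw [hxy, Sym2.mem_iff] at hva hvb
              have haU := ha.1; have hbU := hb.1
              rcases hva with rfl | rfl <;> rcases hvb with rfl | rfl <;>
                rcases hw with rfl | rfl <;> tauto
            simp only [if_neg hin, if_pos hf]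
            omega
          · have h0 : U.filter (· ∈ ends e) = ∅ := by
              rw [Finset.filter_eq_empty_iff]
              intro v hv hve
              simp only [edgesIn, edgesF, Finset.mem_filter, Finset.mem_univ, true_and]
                at hin hf
              exact hf ⟨⟨v, hve, hv⟩, hin⟩
            simp [h0]
    _ = 2 * (edgesIn ends U).card + (edgesF ends U).card := by
        rw [Finset.sum_add_distrib, ← Finset.mul_sum]
        simp [Finset.sum_ite_mem, Finset.univ_inter]

lemma aux_pairs (ends : E → Sym2 V) (hG : Loopless ends) (U : Finset V) :
    2 * (edgesIn ends U).card ≤ maxMultiplicity ends * U.offDiag.card := by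
  have h1 : ∀ e ∈ edgesIn ends U,
      2 ≤ (U.offDiag.filter fun p => ends e = s(p.1, p.2)).card := by
    intro e he
    simp only [edgesIn, Finset.mem_filter, Finset.mem_univ, true_and] at he
    obtain ⟨x, y, hxy⟩ := aux_sym2_rep (ends e)
    have hxne : x ≠ y := by
      intro h; exact hG e (by rw [hxy, h]; exact Sym2.mk_isDiag_iff.2 rfl)
    have hxU : x ∈ U := he x (by rw [hxy]; exact Sym2.mem_mk_left x y)
    have hyU : y ∈ U := he y (by rw [hxy]; exact Sym2.mem_mk_right x y)
    have hsub : ({(x, y), (y, x)} : Finset (V × V)) ⊆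
        U.offDiag.filter fun p => ends e = s(p.1, p.2) := by
      intro p hp
      simp only [Finset.mem_insert, Finset.mem_singleton] at hp
      rcases hp with rfl | rfl <;>
        simp [Finset.mem_offDiag, hxU, hyU, hxne, hxne.symm, hxy, Sym2.eq_swap]
    have hcard : ({(x, y), (y, x)} : Finset (V × V)).card = 2 := by
      rw [Finset.card_insert_of_notMem (by simp [Prod.ext_iff, hxne]),
        Finset.card_singleton]
    calc 2 = _ := hcard.symm
      _ ≤ _ := Finset.card_le_card hsub
  calc 2 * (edgesIn ends U).card
      = ∑ _e ∈ edgesIn ends U, 2 := by rw [Finset.sum_const, smul_eq_mul, mul_comm]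
    _ ≤ ∑ e ∈ edgesIn ends U, (U.offDiag.filter fun p => ends e = s(p.1, p.2)).card :=
        Finset.sum_le_sum h1
    _ ≤ ∑ e : E, (U.offDiag.filter fun p => ends e = s(p.1, p.2)).card :=
        Finset.sum_le_sum_of_subset (Finset.subset_univ _)
    _ = ∑ p ∈ U.offDiag, ((univ : Finset E).filter fun e => ends e = s(p.1, p.2)).card := by
        simp only [Finset.card_filter]; exact Finset.sum_comm
    _ ≤ ∑ _p ∈ U.offDiag, maxMultiplicity ends := by
        apply Finset.sum_le_sum
        intro p _
        rcases Finset.eq_empty_or_nonempty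
            ((univ : Finset E).filter fun e => ends e = s(p.1, p.2)) with h | ⟨e₀, he₀⟩
        · simp [h]
        · rw [Finset.mem_filter] at he₀
          have heq : ((univ : Finset E).filter fun e => ends e = s(p.1, p.2))
              = (univ : Finset E).filter fun f => ends f = ends e₀ :=
            Finset.filter_congr (fun e _ => by rw [← he₀.2])
          rw [heq]
          exact aux_mult_le ends e₀
    _ = maxMultiplicity ends * U.offDiag.card := by rw [Finset.sum_const, smul_eq_mul, mul_comm]

lemma aux_cover_one (ends : E → Sym2 V) (hV : Nonempty V)
    (hd : ∀ v : V, ∃ e : E, v ∈ ends e) : 1 ≤ coverIndex ends := by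
  have hmem : 1 ∈ {k : ℕ | ∃ c : E → Fin k, IsCoverColoring ends c} := by
    refine ⟨fun _ => 0, fun v i => ?_⟩
    obtain ⟨e, he⟩ := hd v
    exact ⟨e, he, Subsingleton.elim _ _⟩
  apply le_csSup _ hmem
  refine ⟨Fintype.card E, ?_⟩
  rintro k ⟨c, hc⟩
  obtain ⟨v⟩ := hV
  have hinj : Function.Injective fun i : Fin k => (hc v i).choose := by
    intro i j hij
    have hi := (hc v i).choose_spec.2
    have hj := (hc v j).choose_spec.2
    rw [← hi, ← hj]
    simp only [hij]
  simpa using Fintype.card_le_of_injective _ hinj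

lemma aux_core (m d k a f p : ℤ) (hm : 2 ≤ m) (hk : 1 ≤ k) (ha : 0 ≤ a) (hf : 0 ≤ f)
    (hB : d * (2 * k + 1) ≤ 2 * a + f)
    (hC : 2 * a ≤ m * (2 * k + 1) * (2 * k))
    (hA : 2 * a + 2 * f < (d - m + 1) * (2 * k + 1 + 1))
    (hp1 : 2 * m * (p - 1) < d) (hp2 : d ≤ 2 * m * p) :
    2 * p * m - 2 * p + 2 * m ≤ d := by
  have hF1 : d ≤ 2 * k * m := by
    by_contra h
    push_neg at h
    have h1 : 0 ≤ (d - 2 * k * m - 1) * k :=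
      mul_nonneg (by linarith) (by linarith)
    nlinarith [hA, hB, hC]
  have hpk : p ≤ k := by
    by_contra h
    push_neg at h
    have h2 : 2 * m * k ≤ 2 * m * (p - 1) :=
      mul_le_mul_of_nonneg_left (by linarith) (by linarith)
    nlinarith [hF1]
  have h2 : a + f < (d - m + 1) * (k + 1) := by
    have h3 : 2 * (a + f) < 2 * ((d - m + 1) * (k + 1)) := by nlinarith [hA]
    linarith
  have h2' : a + f + 1 ≤ (d - m + 1) * (k + 1) := h2
  have hF2 : 2 * (k + 1) * (m - 1) + 2 ≤ d := by nlinarith [hB, h2', hf]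
  nlinarith [mul_nonneg (by linarith : (0:ℤ) ≤ k - p) (by linarith : (0:ℤ) ≤ m - 1), hF2]

/-- Gupta's co-density conjecture implies Gupta's 1967 conjecture: if every
finite loopless multigraph `H` satisfies `ξ(H) ≥ min{δ(H)−1, ⌊Φ(H)⌋}`, then every finite
loopless multigraph `G` whose minimum degree cannot be expressed as `2pμ(G)−q` with `q ≥ 0`
and `p > μ(G)+⌊(q−1)/2⌋` satisfies `ξ(G) ≥ δ(G)−μ(G)+1`. -/
theorem stmt_3
    (CC1 : ∀ (W F : Type) [Fintype W] [DecidableEq W] [Fintype F]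
      (ends' : F → Sym2 W), Loopless ends' →
      min ((minDegree ends' : ℤ) - 1) ⌊codensity ends'⌋ ≤ (coverIndex ends' : ℤ))
    {V E : Type} [Fintype V] [DecidableEq V] [Fintype E]
    (ends : E → Sym2 V) (hG : Loopless ends)
    (hδ : ¬ ∃ p q : ℤ, 0 ≤ q ∧ (maxMultiplicity ends : ℤ) + Int.fdiv (q - 1) 2 < p ∧
      (minDegree ends : ℤ) = 2 * p * (maxMultiplicity ends : ℤ) - q) :
    (minDegree ends : ℤ) - (maxMultiplicity ends : ℤ) + 1 ≤ (coverIndex ends : ℤ) := by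
  classical
  set m := maxMultiplicity ends with hmdef
  set d := minDegree ends with hddef
  -- helper: if d ≥ 1 then coverIndex ≥ 1
  have hcov1 : 1 ≤ d → 1 ≤ coverIndex ends := by
    intro h1
    have hV : Nonempty V := by
      by_contra h
      haveI := not_nonempty_iff.mp h
      have h0 : d = 0 := by
        rw [hddef, minDegree, Set.range_eq_empty, Nat.sInf_empty]
      omega
    apply aux_cover_one ends hV
    intro v
    have h2 := aux_minDeg_le ends v
    have h3 : 0 < (univ.filter fun e => v ∈ ends e).card := by
      have : 0 < mDegree ends v := by omega
      exact this
    obtain ⟨e, he⟩ := Finset.card_pos.mp h3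
    exact ⟨e, (Finset.mem_filter.mp he).2⟩
  by_cases hE : IsEmpty E
  · exfalso
    apply hδ
    haveI := hE
    have hm0 : m = 0 := by
      rw [hmdef, maxMultiplicity, Set.range_eq_empty, csSup_empty]
      rfl
    have hd0 : d = 0 := by
      rcases isEmpty_or_nonempty V with hV | hV
      · haveI := hV
        rw [hddef, minDegree, Set.range_eq_empty, Nat.sInf_empty]
      · obtain ⟨v⟩ := hV
        have h1 : mDegree ends v = 0 := by
          simp [mDegree, Finset.univ_eq_empty]
        have := aux_minDeg_le ends v
        omega
    refine ⟨0, 0, le_refl 0, ?_, ?_⟩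
    · rw [hm0]
      show (0:ℤ) + ((0:ℤ) - 1).fdiv 2 < 0
      decide
    · rw [hd0, hm0]
      push_cast
  · have hE' : Nonempty E := not_isEmpty_iff.mp hE
    have hm1 : 1 ≤ m := by
      obtain ⟨e₀⟩ := hE'
      have h1 : 0 < (univ.filter fun f => ends f = ends e₀).card :=
        Finset.card_pos.mpr ⟨e₀, by simp⟩
      exact h1.trans_le (aux_mult_le ends e₀)
    by_cases hm2 : 2 ≤ m
    · -- main split on |V|
      by_cases hV3 : 3 ≤ Fintype.card V
      · -- MAIN CASE
        have key : ∀ U : Finset V, IsOddSet U →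
            ((d:ℤ) - m + 1) * ((U.card : ℤ) + 1) ≤ 2 * ((edgesPlus ends U).card : ℤ) := by
          intro U hU
          by_contra hA
          push_neg at hA
          obtain ⟨t, ht⟩ := hU.2
          have ht1 : 1 ≤ t := by have := hU.1; omega
          have hBnat : d * U.card ≤ 2 * (edgesIn ends U).card + (edgesF ends U).card := by
            calc d * U.card = U.card • d := by rw [smul_eq_mul, mul_comm]
              _ ≤ ∑ v ∈ U, mDegree ends v :=
                  Finset.card_nsmul_le_sum _ _ _ (fun v _ => aux_minDeg_le ends v)
              _ = ∑ e : E, (U.filter (· ∈ ends e)).card := aux_sum_deg ends U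
              _ ≤ _ := aux_deg_count ends U
          have hCnat : 2 * (edgesIn ends U).card ≤ m * ((2 * t + 1) * (2 * t)) := by
            have h1 := aux_pairs ends hG U
            have h2 : U.offDiag.card = (2 * t + 1) * (2 * t) := by
              rw [Finset.offDiag_card, ht]
              have e1 : (2*t+1) * (2*t+1) = (2*t+1)*(2*t) + (2*t+1) := by ring
              rw [e1, Nat.add_sub_cancel]
            rw [h2] at h1
            exact h1
          zify at hBnat hCnat
          have hUc : ((U.card : ℤ)) = 2 * (t:ℤ) + 1 := by exact_mod_cast ht
          have hplus : ((edgesPlus ends U).card : ℤ)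
              = ((edgesIn ends U).card : ℤ) + ((edgesF ends U).card : ℤ) := by
            exact_mod_cast aux_plus_card ends U
          rw [hUc] at hBnat hA
          have hmz : (2 : ℤ) ≤ (m : ℤ) := by exact_mod_cast hm2
          have hkz : (1 : ℤ) ≤ (t : ℤ) := by exact_mod_cast ht1
          set p : ℤ := ((d:ℤ) + 2 * m - 1) / (2 * m) with hpdef
          have hmpos : (0:ℤ) < 2 * (m:ℤ) := by linarith
          have hdm := Int.mul_ediv_add_emod ((d:ℤ) + 2 * m - 1) (2 * m)
          rw [← hpdef] at hdm
          have hr0 : 0 ≤ ((d:ℤ) + 2 * m - 1) % (2 * m) :=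
            Int.emod_nonneg _ (by linarith)
          have hrlt := Int.emod_lt_of_pos ((d:ℤ) + 2 * m - 1) hmpos
          have hp2 : (d:ℤ) ≤ 2 * m * p := by linarith
          have hp1 : 2 * (m:ℤ) * (p - 1) < (d:ℤ) := by linarith
          have hcore := aux_core (m:ℤ) (d:ℤ) (t:ℤ) ((edgesIn ends U).card : ℤ)
            ((edgesF ends U).card : ℤ) p hmz hkz (Int.ofNat_nonneg _) (Int.ofNat_nonneg _)
            (by linarith) (by linarith)
            (by linarith) hp1 hp2
          apply hδ
          refine ⟨p, 2 * p * (m:ℤ) - (d:ℤ), by linarith, ?_, by ring⟩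
          have hfd : ((2 * p * (m:ℤ) - (d:ℤ)) - 1).fdiv 2
              = ((2 * p * (m:ℤ) - (d:ℤ)) - 1) / 2 :=
            Int.fdiv_eq_ediv_of_nonneg _ (by norm_num)
          rw [hfd]
          have h5 : 2 * p * (m:ℤ) - (d:ℤ) ≤ 2 * p - 2 * m := by linarith
          generalize hQ : 2 * p * (m:ℤ) - (d:ℤ) = Q at h5 ⊢
          omega
        have hΦ : ((d:ℤ) - m + 1) ≤ ⌊codensity ends⌋ := by
          rw [Int.le_floor]
          apply le_csInf
          · obtain ⟨U, hUsub, hUcard⟩ :=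
              Finset.exists_subset_card_eq (by rw [Finset.card_univ]; exact hV3 :
                3 ≤ (univ : Finset V).card)
            exact ⟨_, U, ⟨by omega, by rw [hUcard]; exact ⟨1, by norm_num⟩⟩, rfl⟩
          · rintro b ⟨U, hU, rfl⟩
            have hn : (0:ℝ) < (U.card : ℝ) + 1 := by positivity
            rw [le_div_iff₀ hn]
            exact_mod_cast key U hU
        have hCC := CC1 V E ends hG
        rw [← hddef] at hCC
        have h1 : (d:ℤ) - m + 1 ≤ (d:ℤ) - 1 := by
          have : (2:ℤ) ≤ (m:ℤ) := by exact_mod_cast hm2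
          linarith
        exact le_trans (le_min h1 hΦ) hCC
      · -- |V| ≤ 2
        have hdm : d ≤ m := by
          obtain ⟨e₀⟩ := hE'
          obtain ⟨x, y, hxy⟩ := aux_sym2_rep (ends e₀)
          have hxny : x ≠ y := by
            intro h; exact hG e₀ (by rw [hxy, h]; exact Sym2.mk_isDiag_iff.2 rfl)
          have huniv : ∀ v : V, v = x ∨ v = y := by
            by_contra h
            push_neg at h
            obtain ⟨z, hz1, hz2⟩ := h
            apply hV3
            have hsub : ({z, x, y} : Finset V).card = 3 := by
              rw [Finset.card_insert_of_notMem (by simp [hz1, hz2]),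
                Finset.card_insert_of_notMem (by simp [hxny]), Finset.card_singleton]
            calc 3 = ({z, x, y} : Finset V).card := hsub.symm
              _ ≤ (univ : Finset V).card := Finset.card_le_univ _
              _ = Fintype.card V := Finset.card_univ
          have hall : ∀ e : E, ends e = ends e₀ := by
            intro e
            obtain ⟨u, w, huw⟩ := aux_sym2_rep (ends e)
            have hunw : u ≠ w := by
              intro h; exact hG e (by rw [huw, h]; exact Sym2.mk_isDiag_iff.2 rfl)
            rw [huw, hxy]
            rcases huniv u with rfl | rfl <;> rcases huniv w with rfl | rfl
            · exact absurd rfl hunw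
            · rfl
            · exact Sym2.eq_swap
            · exact absurd rfl hunw
          have h1 : d ≤ mDegree ends x := aux_minDeg_le ends x
          have h2 : mDegree ends x = Fintype.card E := by
            rw [mDegree, Finset.filter_true_of_mem, Finset.card_univ]
            intro e _
            rw [hall e, hxy]
            exact Sym2.mem_mk_left x y
          have h3 : Fintype.card E ≤ m := by
            have h4 := aux_mult_le ends e₀
            rw [Finset.filter_true_of_mem (fun e _ => hall e), Finset.card_univ] at h4
            exact h4
          omega
        rcases Nat.eq_zero_or_pos d with h0 | h1
        · have h2 : (d:ℤ) - m + 1 ≤ 0 := by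
            have : (1:ℤ) ≤ (m:ℤ) := by exact_mod_cast hm1
            rw [h0]; push_cast; linarith
          exact h2.trans (Int.ofNat_nonneg _)
        · have hc := hcov1 h1
          have h2 : (d:ℤ) ≤ (m:ℤ) := by exact_mod_cast hdm
          have h3 : (1:ℤ) ≤ (coverIndex ends : ℤ) := by exact_mod_cast hc
          linarith
    · -- m = 1
      have hm1' : m = 1 := by omega
      have hd1 : d ≤ 1 := by
        by_contra h
        push_neg at h
        apply hδ
        rw [hm1']
        rcases Nat.even_or_odd d with ⟨t, ht⟩ | ⟨t, ht⟩
        · refine ⟨(t : ℤ), 0, le_refl 0, ?_, ?_⟩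
          · have hfd : ((0:ℤ) - 1).fdiv 2 = -1 := by decide
            rw [hfd]
            have : 1 ≤ t := by omega
            have : (1:ℤ) ≤ (t:ℤ) := by exact_mod_cast this
            push_cast
            linarith
          · push_cast [ht]
            ring
        · refine ⟨(t : ℤ) + 1, 1, by norm_num, ?_, ?_⟩
          · have hfd : ((1:ℤ) - 1).fdiv 2 = 0 := by decide
            rw [hfd]
            have : 1 ≤ t := by omega
            have : (1:ℤ) ≤ (t:ℤ) := by exact_mod_cast this
            push_cast
            linarith
          · push_cast [ht]
            ring
      rw [hm1']
      rcases Nat.eq_zero_or_pos d with h0 | h1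
      · have h4 : (0:ℤ) ≤ (coverIndex ends : ℤ) := Int.ofNat_nonneg _
        rw [h0]
        push_cast
        linarith
      · have hc := hcov1 h1
        have h2 : (1:ℤ) ≤ (coverIndex ends : ℤ) := by exact_mod_cast hc
        have h3 : (d:ℤ) = 1 := by
          have : d = 1 := by omega
          exact_mod_cast this
        rw [h3]
        push_cast
        linarith
end

section
/- Every finite loopless multigraph G satisfies Φ(G) ≥ δ(G) − μ(G); that is, for every odd set U ⊆ V one has 2|E⁺(U)| ≥ (δ(G)−μ(G))(|U|+1). -/
open Finset

variable {V E : Type} [Fintype V] [DecidableEq V] [Fintype E]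

/-!
Fix a vertex `v ∈ U`. Double counting the incidences between `U` and the edges gives
`∑_{u ∈ U} d(u) + |F(U)| = 2|E⁺(U)|`, where `F(U)` is the set of edges leaving `U`. The edges at `v`
that stay inside `U` join `v` to one of the other `|U| - 1` vertices of `U`, at most `μ` times each,
so `δ ≤ d(v) ≤ μ(|U| - 1) + |F(U)|`. Hence
`2|E⁺(U)| ≥ δ|U| + δ - μ(|U| - 1) ≥ (δ - μ)(|U| + 1)`.
-/

theorem Sym2.card_filter_mem_eq {α : Type*} [Fintype α] [DecidableEq α] (U : Finset α)
    {z : Sym2 α} (hz : ¬ z.IsDiag) :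
    (U.filter (· ∈ z)).card =
      (if ∃ v ∈ z, v ∈ U then 1 else 0) + (if ∀ v ∈ z, v ∈ U then 1 else 0) := by
  induction z using Sym2.ind with
  | _ a b =>
  have hab : a ≠ b := by simpa using hz
  have hfilter : U.filter (· ∈ s(a, b)) = U.filter (· = a) ∪ U.filter (· = b) := by
    ext; simp only [mem_filter, mem_union, Sym2.mem_iff, and_or_left]
  rw [hfilter, card_union_of_disjoint (disjoint_filter.2 fun _ _ ha hb => hab (ha.symm.trans hb)),
    filter_eq', filter_eq']
  by_cases ha : a ∈ U <;> by_cases hb : b ∈ U <;> simp [ha, hb]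

theorem sum_mDegree_eq {V E : Type} [Fintype V] [DecidableEq V] [Fintype E]
    (ends : E → Sym2 V) (hG : Loopless ends) (U : Finset V) :
    ∑ v ∈ U, mDegree ends v = (edgesPlus ends U).card + (edgesIn ends U).card := by
  calc ∑ v ∈ U, mDegree ends v = ∑ e, (U.filter (· ∈ ends e)).card := by
        simp only [mDegree, card_filter]; exact sum_comm
    _ = _ := by
        simp only [Sym2.card_filter_mem_eq U (hG _), sum_add_distrib, edgesPlus, edgesIn,
          card_filter]

theorem card_edgesF_add_card_edgesIn {V E : Type} [Fintype V] [DecidableEq V] [Fintype E]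
    (ends : E → Sym2 V) (U : Finset V) :
    (edgesF ends U).card + (edgesIn ends U).card = (edgesPlus ends U).card := by
  have hIn : edgesIn ends U = (edgesPlus ends U).filter fun e => ∀ v ∈ ends e, v ∈ U := by
    ext e
    simp only [edgesIn, edgesPlus, mem_filter, mem_univ, true_and, iff_and_self]
    exact fun h => ⟨_, (ends e).out_fst_mem, h _ (ends e).out_fst_mem⟩
  rw [hIn, edgesF, ← filter_filter, add_comm]
  exact card_filter_add_card_filter_not _

theorem sum_mDegree_add_card_edgesF {V E : Type} [Fintype V] [DecidableEq V] [Fintype E]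
    (ends : E → Sym2 V) (hG : Loopless ends) (U : Finset V) :
    ∑ v ∈ U, mDegree ends v + (edgesF ends U).card = 2 * (edgesPlus ends U).card := by
  rw [sum_mDegree_eq ends hG, ← card_edgesF_add_card_edgesIn ends U]
  ring

theorem minDegree_le_mDegree {V E : Type} [DecidableEq V] [Fintype E]
    (ends : E → Sym2 V) (v : V) : minDegree ends ≤ mDegree ends v :=
  Nat.sInf_le ⟨v, rfl⟩

theorem card_filter_ends_eq_le_maxMultiplicity {V E : Type} [DecidableEq V] [Fintype E]
    (ends : E → Sym2 V) (z : Sym2 V) :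
    (univ.filter fun e => ends e = z).card ≤ maxMultiplicity ends := by
  obtain ⟨e, rfl⟩ | hz := em (∃ e, ends e = z)
  · exact le_csSup (Set.finite_range _).bddAbove ⟨e, rfl⟩
  · simp [filter_false_of_mem fun e _ => (hz ⟨e, ·⟩)]

theorem card_incident_edgesIn_le {V E : Type} [Fintype V] [DecidableEq V] [Fintype E]
    (ends : E → Sym2 V) (hG : Loopless ends) (U : Finset V) (v : V) :
    (univ.filter fun e => v ∈ ends e ∧ ∀ w ∈ ends e, w ∈ U).card ≤
      maxMultiplicity ends * (U.erase v).card := by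
  have hmaps : ∀ e ∈ univ.filter fun e => v ∈ ends e ∧ ∀ w ∈ ends e, w ∈ U,
      ends e ∈ (U.erase v).image (s(v, ·)) := by
    intro e he
    simp only [mem_filter, mem_univ, true_and] at he
    obtain ⟨u, hu⟩ := Sym2.mem_iff_exists.mp he.1
    have huv : u ≠ v := fun h => hG e (by simp [hu, h])
    exact mem_image.mpr ⟨u, mem_erase.mpr ⟨huv, he.2 u (by simp [hu])⟩, hu.symm⟩
  calc _ ≤ maxMultiplicity ends * ((U.erase v).image (s(v, ·))).card :=
        card_le_mul_card_image_of_maps_to hmaps _ fun z _ =>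
          (card_le_card (filter_subset_filter _ (subset_univ _))).trans
            (card_filter_ends_eq_le_maxMultiplicity ends z)
    _ ≤ _ := Nat.mul_le_mul_left _ card_image_le

theorem mDegree_le {V E : Type} [Fintype V] [DecidableEq V] [Fintype E]
    (ends : E → Sym2 V) (hG : Loopless ends) {U : Finset V} {v : V} (hv : v ∈ U) :
    mDegree ends v ≤ maxMultiplicity ends * (U.erase v).card + (edgesF ends U).card := by
  have hout : (univ.filter fun e => v ∈ ends e ∧ ¬ ∀ w ∈ ends e, w ∈ U) ⊆ edgesF ends U := by
    intro e he
    simp only [edgesF, mem_filter, mem_univ, true_and] at he ⊢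
    exact ⟨⟨v, he.1, hv⟩, he.2⟩
  rw [mDegree, ← card_filter_add_card_filter_not (fun e => ∀ w ∈ ends e, w ∈ U), filter_filter,
    filter_filter]
  exact add_le_add (card_incident_edgesIn_le ends hG U v) (card_le_card hout)

/-- Every finite loopless multigraph `G` satisfies `Φ(G) ≥ δ(G) − μ(G)`;
that is, for every odd set `U` one has `2|E⁺(U)| ≥ (δ(G)−μ(G))(|U|+1)`. -/
theorem stmt_7
    {V E : Type} [Fintype V] [DecidableEq V] [Fintype E]
    (ends : E → Sym2 V) (hG : Loopless ends) :
    ∀ U : Finset V, IsOddSet U →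
      ((minDegree ends : ℤ) - (maxMultiplicity ends : ℤ)) * ((U.card : ℤ) + 1) ≤
        2 * ((edgesPlus ends U).card : ℤ) := by
  rintro U ⟨hU3, -⟩
  obtain ⟨v, hv⟩ := card_pos.mp (show 0 < U.card by omega)
  have hsum : minDegree ends * U.card ≤ ∑ w ∈ U, mDegree ends w := by
    simpa [mul_comm] using card_nsmul_le_sum U _ _ fun w _ => minDegree_le_mDegree ends w
  have hv_deg := (minDegree_le_mDegree ends v).trans (mDegree_le ends hG hv)
  have hcount := sum_mDegree_add_card_edgesF ends hG U
  rw [card_erase_of_mem hv] at hv_deg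
  zify [show 1 ≤ U.card by omega] at hsum hv_deg hcount
  linarith
end

section
/- Let μ ≥ 1 and δ ≥ 1 be integers such that δ cannot be expressed in the form 2pμ−q for any two integers p and q satisfying q ≥ 0 and p > μ+⌊(q−1)/2⌋ (equivalently, δ ∉ Ω_p = {2(p+1)μ−2p, 2(p+1)μ−2p+1, …, 2pμ} for every integer p ≥ μ). Then either δ ≤ 2μ²−1, or there exists an integer p ≥ μ such that 2pμ+1 ≤ δ ≤ 2(p+2)μ−(2p+3). -/
/-- If integers `μ ≥ 1` and `δ ≥ 1` are such that `δ` cannot be expressed as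
`2pμ−q` with `q ≥ 0` and `p > μ+⌊(q−1)/2⌋`, then either `δ ≤ 2μ²−1`, or there exists an
integer `p ≥ μ` with `2pμ+1 ≤ δ ≤ 2(p+2)μ−(2p+3)`. -/
theorem stmt_8 (μ δ : ℤ) (hμ : 1 ≤ μ) (hδ : 1 ≤ δ)
    (h : ¬ ∃ p q : ℤ, 0 ≤ q ∧ μ + Int.fdiv (q - 1) 2 < p ∧ δ = 2 * p * μ - q) :
    δ ≤ 2 * μ ^ 2 - 1 ∨
      ∃ p : ℤ, μ ≤ p ∧ 2 * p * μ + 1 ≤ δ ∧ δ ≤ 2 * (p + 2) * μ - (2 * p + 3) := by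
  by_cases hd : δ ≤ 2 * μ ^ 2 - 1
  · exact Or.inl hd
  push_neg at hd
  -- δ ≥ 2μ²; first rule out δ = 2μ²
  have hne : δ ≠ 2 * μ ^ 2 := by
    intro he
    refine h ⟨μ, 0, le_refl 0, ?_, by rw [he]; ring⟩
    have : Int.fdiv ((0:ℤ) - 1) 2 = -1 := by decide
    omega
  have hd2 : 2 * μ ^ 2 + 1 ≤ δ := by omega
  have hc : (0:ℤ) < 2 * μ := by omega
  set p : ℤ := (δ - 1) / (2 * μ) with hp
  have hp1 : 2 * μ * p ≤ δ - 1 := by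
    rw [hp, mul_comm]; exact Int.ediv_mul_le _ (by omega)
  have hp2 : δ - 1 < 2 * μ * (p + 1) := by
    rw [hp, mul_comm]; exact Int.lt_ediv_add_one_mul_self _ hc
  have hpμ : μ ≤ p := by
    rw [hp]
    refine Int.le_ediv_iff_mul_le hc |>.2 ?_
    nlinarith
  -- δ ∉ Ω_{p+1}, so δ ≤ 2(p+2)μ - (2p+3)
  have hgap : δ ≤ 2 * (p + 2) * μ - (2 * p + 3) := by
    by_contra hg
    push_neg at hg
    set q : ℤ := 2 * (p + 1) * μ - δ with hq
    have hq0 : 0 ≤ q := by rw [hq]; nlinarith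
    have hqle : q ≤ 2 * (p + 1 - μ) := by rw [hq]; nlinarith
    have hfd : Int.fdiv (q - 1) 2 ≤ p - μ := by
      have h1 : Int.fdiv (q - 1) 2 = (q - 1) / 2 := Int.fdiv_eq_ediv_of_nonneg _ (by norm_num)
      rw [h1]
      have h2 : (q - 1) / 2 ≤ (2 * (p - μ) + 1) / 2 :=
        Int.ediv_le_ediv (by norm_num) (by omega)
      have h3 : (2 * (p - μ) + 1) / 2 = p - μ := by omega
      omega
    exact h ⟨p + 1, q, hq0, by linarith [hfd], by rw [hq]; ring⟩
  exact Or.inr ⟨p, hpμ, by nlinarith, hgap⟩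
end

section
/- Let G=(V,E) be a finite loopless multigraph and let U₁, U₂ ⊆ V. Then |E⁺(U₁)| + |E⁺(U₂)| ≥ |E⁺(U₁∖U₂)| + |E⁺(U₂∖U₁)| + 2|E(U₁∩U₂)| + |F(U₁∩U₂)|. -/
open Finset

variable {V E : Type} [Fintype V] [DecidableEq V] [Fintype E]

/-- Both sides of the theorem are sums over the edges, so it suffices to compare the contributions
of a single edge; these depend only on which of `U₁`, `U₂` contain each of its two ends. -/
theorem Sym2.edge_contribution_le (z : Sym2 V) (U₁ U₂ : Finset V) :
    (if ∃ v ∈ z, v ∈ U₁ \ U₂ then 1 else 0) + (if ∃ v ∈ z, v ∈ U₂ \ U₁ then 1 else 0) +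
        2 * (if ∀ v ∈ z, v ∈ U₁ ∩ U₂ then 1 else 0) +
        (if (∃ v ∈ z, v ∈ U₁ ∩ U₂) ∧ ¬ ∀ v ∈ z, v ∈ U₁ ∩ U₂ then 1 else 0) ≤
      (if ∃ v ∈ z, v ∈ U₁ then 1 else 0) + (if ∃ v ∈ z, v ∈ U₂ then 1 else 0) := by
  induction z using Sym2.ind with
  | h a b =>
    simp only [Sym2.mem_iff, forall_eq_or_imp, forall_eq, exists_eq_or_imp,
      Finset.mem_sdiff, Finset.mem_inter]
    by_cases a ∈ U₁ <;> by_cases a ∈ U₂ <;> by_cases b ∈ U₁ <;> by_cases b ∈ U₂ <;> simp [*]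

theorem stmt_10_general
    {V E : Type} [Fintype V] [DecidableEq V] [Fintype E]
    (ends : E → Sym2 V) (U₁ U₂ : Finset V) :
    (edgesPlus ends (U₁ \ U₂)).card + (edgesPlus ends (U₂ \ U₁)).card +
        2 * (edgesIn ends (U₁ ∩ U₂)).card + (edgesF ends (U₁ ∩ U₂)).card ≤
      (edgesPlus ends U₁).card + (edgesPlus ends U₂).card := by
  simp only [edgesPlus, edgesIn, edgesF, Finset.card_filter, Finset.mul_sum,
    ← Finset.sum_add_distrib]
  exact Finset.sum_le_sum fun e _ => (ends e).edge_contribution_le U₁ U₂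

/-- For any `U₁, U₂ ⊆ V`,
`|E⁺(U₁)| + |E⁺(U₂)| ≥ |E⁺(U₁∖U₂)| + |E⁺(U₂∖U₁)| + 2|E(U₁∩U₂)| + |F(U₁∩U₂)|`. -/
theorem stmt_10
    {V E : Type} [Fintype V] [DecidableEq V] [Fintype E]
    (ends : E → Sym2 V) (hG : Loopless ends) (U₁ U₂ : Finset V) :
    (edgesPlus ends (U₁ \ U₂)).card + (edgesPlus ends (U₂ \ U₁)).card +
        2 * (edgesIn ends (U₁ ∩ U₂)).card + (edgesF ends (U₁ ∩ U₂)).card ≤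
      (edgesPlus ends U₁).card + (edgesPlus ends U₂).card :=
  stmt_10_general ends U₁ U₂
end
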